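/- The Fibonacci word f = φ^ω(0) equals the infinite product 0·1·0·φ²(10)·φ⁴(10)·φ⁶(10)··· ; equivalently, for all N ≥ 0, the word 010·φ²(10)·φ⁴(10)···φ^{2N}(10) is a prefix of the Fibonacci word. -/

import Mathlib

/-- The Fibonacci morphism on letters: φ(0)=01, φ(1)=0 (0 = `false`, 1 = `true`). -/
def phi : Bool → List Bool
  | false => [false, true]
  | true  => [false]

/-- The Fibonacci morphism extended to words. -/
def phiW (w : List Bool) : List Bool := w.flatMap phi

/-- The finite word `u` is a prefix of the infinite word `x`. -/
def IsPrefixI (u : List Bool) (x : ℕ → Bool) : Prop :=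
  ∀ i, i < u.length → u.getD i false = x i

/-- `f` is the Fibonacci word: the fixed point of φ starting with 0,
i.e. every `φ^n(0)` is a prefix of `f`. -/
def IsFibWord (f : ℕ → Bool) : Prop :=
  ∀ n, IsPrefixI (phiW^[n] [false]) f

/-!
Since `φ(0) = 01` and `φ(1) = 0`, we have `φ^(n+2)(0) = φ^(n+1)(0) φ^n(0) = φ^n(0) φ^n(1) φ^n(0)`,
i.e. `φ^(n+2)(0) = φ^n(0) · φ^n(10)`. Telescoping from `φ^2(0) = 010` shows that
`010 · φ^2(10) ⋯ φ^(2N)(10) = φ^(2N+2)(0)`, a prefix of the Fibonacci word.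
-/

lemma phiW_append (u v : List Bool) : phiW (u ++ v) = phiW u ++ phiW v :=
  List.flatMap_append

lemma iterate_phiW_append (n : ℕ) (u v : List Bool) :
    phiW^[n] (u ++ v) = phiW^[n] u ++ phiW^[n] v :=
  Function.Semiconj₂.iterate phiW_append n u v

lemma iterate_phiW_succ_false (n : ℕ) :
    phiW^[n + 1] [false] = phiW^[n] [false] ++ phiW^[n] [true] :=
  iterate_phiW_append n [false] [true]

lemma iterate_phiW_succ_true (n : ℕ) : phiW^[n + 1] [true] = phiW^[n] [false] := rfl

lemma iterate_phiW_add_two_false (n : ℕ) :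
    phiW^[n + 2] [false] = phiW^[n] [false] ++ phiW^[n] [true, false] := by
  rw [iterate_phiW_succ_false, iterate_phiW_succ_true, iterate_phiW_succ_false,
    List.append_assoc, ← iterate_phiW_append]
  rfl

lemma product_expansion_eq_iterate_phiW (N : ℕ) :
    [false, true, false] ++
        ((List.range N).map (fun k => phiW^[2 * (k + 1)] [true, false])).flatten
      = phiW^[2 * N + 2] [false] := by
  induction N with
  | zero => rfl
  | succ N ih =>
    rw [List.range_succ, List.map_append, List.flatten_append, ← List.append_assoc, ih,
      show 2 * (N + 1) = 2 * N + 2 by ring, iterate_phiW_add_two_false (2 * N + 2)]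
    simp only [List.map_singleton, List.flatten_singleton]
    rfl

theorem fib_word_product_expansion (f : ℕ → Bool) (hf : IsFibWord f) (N : ℕ) :
    IsPrefixI
      ([false, true, false] ++
        ((List.range N).map (fun k => phiW^[2 * (k + 1)] [true, false])).flatten) f := by
  rw [product_expansion_eq_iterate_phiW]
  exact hf (2 * N + 2)
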